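/- arXiv:1805.04981 — 2 statements merged into one kernel-verified Lean document; each statement's English description precedes it below -/
import Mathlib

section
/- Let L̃1, L̃2, α1, α2, B1, B2 be positive reals with L̃1 < L̃2, and define g : ℝ → ℝ by g(R) = L̃1·( (2^{B1/L̃1 + R} − 2^R)/α1 + (2^R − 1)/α2 ) + ((L̃2 − L̃1)/α2)·( 2^{(B2 − L̃1·R)/(L̃2 − L̃1)} − 1 ). Then g is convex on ℝ and attains its global minimum over ℝ at the unique point R_d = B2/L̃2 − (L̃2 − L̃1)·φ1/L̃2, where φ1 = log2( (α2/α1)·(2^{B1/L̃1} − 1) + 1 ). -/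
/-- Base-2 logarithm. -/
noncomputable def log2 (x : ℝ) : ℝ := Real.logb 2 x

/-!
Since `2 ^ (B1 / Lt1 + R) = 2 ^ (B1 / Lt1) * 2 ^ R`, the objective is `a * 2 ^ R + c * d ^ R + k`
with `a = Lt1 * X / α2 > 0`, `c > 0` and `d = 2 ^ (-Lt1 / (Lt2 - Lt1))`, where `X = 2 ^ φ1`:
a positive combination of exponentials, hence strictly convex. At `Rd` the second exponent
`(B2 - Lt1 * Rd) / (Lt2 - Lt1)` equals `Rd + φ1`, which makes the two terms of the derivative
cancel, so `Rd` is the unique global minimiser.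
-/

open Real Set

theorem strictConvexOn_rpow_left {b : ℝ} (hb₀ : 0 < b) (hb₁ : b ≠ 1) :
    StrictConvexOn ℝ univ (fun x : ℝ => b ^ x) := by
  have hlog : log b ≠ 0 := log_ne_zero_of_pos_of_ne_one hb₀ hb₁
  refine ⟨convex_univ, fun x _ y _ hxy s t hs ht hst => ?_⟩
  simp only [smul_eq_mul, rpow_def_of_pos hb₀]
  convert strictConvexOn_exp.2 (mem_univ (log b * x)) (mem_univ (log b * y))
    (by simpa [hlog] using hxy) hs ht hst using 2 <;> simp only [smul_eq_mul]
  ring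

theorem strictConvexOn_mul_rpow_left {a b : ℝ} (ha : 0 < a) (hb₀ : 0 < b) (hb₁ : b ≠ 1) :
    StrictConvexOn ℝ univ (fun x : ℝ => a * b ^ x) := by
  refine ⟨convex_univ, fun x _ y _ hxy s t hs ht hst => ?_⟩
  have h := (strictConvexOn_rpow_left hb₀ hb₁).2 (mem_univ x) (mem_univ y) hxy hs ht hst
  simp only [smul_eq_mul] at h ⊢
  nlinarith [mul_lt_mul_of_pos_left h ha]

theorem ConvexOn.isMinOn_of_hasDerivAt_eq_zero {S : Set ℝ} {f : ℝ → ℝ} {x : ℝ}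
    (hf : ConvexOn ℝ S f) (hx : x ∈ interior S) (hf' : HasDerivAt f 0 x) : IsMinOn f S x :=
  hf.isMinOn_of_rightDeriv_eq_zero hx <|
    hf'.hasDerivWithinAt.derivWithin (uniqueDiffWithinAt_Ioi x)

section TwoExponentials

variable {a b c d : ℝ}

theorem strictConvexOn_two_rpow (ha : 0 < a) (hc : 0 ≤ c) (hb₀ : 0 < b) (hb₁ : b ≠ 1)
    (hd : 0 < d) (k : ℝ) : StrictConvexOn ℝ univ (fun x : ℝ => a * b ^ x + c * d ^ x + k) :=
  ((strictConvexOn_mul_rpow_left ha hb₀ hb₁).add_convexOn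
    ((convexOn_rpow_left hd).smul hc)).add_const k

theorem hasDerivAt_two_rpow (hb : 0 < b) (hd : 0 < d) (k x : ℝ) :
    HasDerivAt (fun x : ℝ => a * b ^ x + c * d ^ x + k)
      (a * (b ^ x * log b) + c * (d ^ x * log d)) x :=
  ((((hasStrictDerivAt_const_rpow hb x).hasDerivAt.const_mul a).add
    ((hasStrictDerivAt_const_rpow hd x).hasDerivAt.const_mul c)).add_const k)

end TwoExponentials

section CaseBI

variable {Lt1 Lt2 α1 α2 B1 B2 : ℝ}

theorem caseBI_objective_eq (hα1 : α1 ≠ 0) (hα2 : α2 ≠ 0) (hL : Lt1 ≠ Lt2)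
    (R : ℝ) :
    Lt1 * (((2 : ℝ) ^ (B1 / Lt1 + R) - 2 ^ R) / α1 + (2 ^ R - 1) / α2) +
        (Lt2 - Lt1) / α2 * ((2 : ℝ) ^ ((B2 - Lt1 * R) / (Lt2 - Lt1)) - 1) =
      Lt1 * ((α2 / α1) * ((2 : ℝ) ^ (B1 / Lt1) - 1) + 1) / α2 * 2 ^ R +
        (Lt2 - Lt1) / α2 * 2 ^ (B2 / (Lt2 - Lt1)) * ((2 : ℝ) ^ (-(Lt1 / (Lt2 - Lt1)))) ^ R +
        (-(Lt1 / α2) - (Lt2 - Lt1) / α2) := by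
  have hD : Lt2 - Lt1 ≠ 0 := sub_ne_zero.2 hL.symm
  have hsplit : (2 : ℝ) ^ ((B2 - Lt1 * R) / (Lt2 - Lt1)) =
      2 ^ (B2 / (Lt2 - Lt1)) * ((2 : ℝ) ^ (-(Lt1 / (Lt2 - Lt1)))) ^ R := by
    rw [← rpow_mul zero_le_two, ← rpow_add two_pos]
    congr 1
    field_simp
    ring
  rw [rpow_add two_pos, hsplit]
  field_simp
  ring

theorem caseBI_deriv_eq_zero {X Rd : ℝ} (hX : 0 < X) (hLt2 : Lt2 ≠ 0) (hα2 : α2 ≠ 0)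
    (hL : Lt1 ≠ Lt2) (hRd : Rd = B2 / Lt2 - (Lt2 - Lt1) * log2 X / Lt2) :
    Lt1 * X / α2 * (2 ^ Rd * log 2) +
        (Lt2 - Lt1) / α2 * 2 ^ (B2 / (Lt2 - Lt1)) *
          (((2 : ℝ) ^ (-(Lt1 / (Lt2 - Lt1)))) ^ Rd * log (2 ^ (-(Lt1 / (Lt2 - Lt1))))) = 0 := by
  have hD : Lt2 - Lt1 ≠ 0 := sub_ne_zero.2 hL.symm
  have hexp : B2 / (Lt2 - Lt1) + -(Lt1 / (Lt2 - Lt1)) * Rd = Rd + log2 X := by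
    rw [hRd]
    field_simp
    ring
  have hpow : (2 : ℝ) ^ (B2 / (Lt2 - Lt1)) * ((2 : ℝ) ^ (-(Lt1 / (Lt2 - Lt1)))) ^ Rd =
      X * 2 ^ Rd := by
    rw [← rpow_mul zero_le_two, ← rpow_add two_pos, hexp, rpow_add two_pos,
      log2, rpow_logb two_pos (by norm_num) hX, mul_comm]
  rw [log_rpow two_pos]
  field_simp
  linear_combination (-(Lt1 * log 2)) * hpow

end CaseBI

theorem caseBI_objective_convex_min_general
    (Lt1 Lt2 α1 α2 B1 B2 : ℝ)
    (hLt1 : 0 < Lt1) (hLt2 : 0 < Lt2) (hα1 : 0 < α1) (hα2 : 0 < α2)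
    (hB1 : 0 < B1) (hL : Lt1 < Lt2)
    (g : ℝ → ℝ)
    (hg : g = fun R : ℝ =>
      Lt1 * (((2 : ℝ) ^ (B1 / Lt1 + R) - (2 : ℝ) ^ R) / α1 +
        ((2 : ℝ) ^ R - 1) / α2) +
      ((Lt2 - Lt1) / α2) * ((2 : ℝ) ^ ((B2 - Lt1 * R) / (Lt2 - Lt1)) - 1))
    (Rd : ℝ)
    (hRd : Rd = B2 / Lt2 -
      (Lt2 - Lt1) * log2 ((α2 / α1) * ((2 : ℝ) ^ (B1 / Lt1) - 1) + 1) / Lt2) :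
    ConvexOn ℝ Set.univ g ∧
    (∀ R : ℝ, g Rd ≤ g R) ∧
    (∀ R : ℝ, (∀ S : ℝ, g R ≤ g S) → R = Rd) := by
  have hD : 0 < Lt2 - Lt1 := sub_pos.2 hL
  have hX : 0 < (α2 / α1) * ((2 : ℝ) ^ (B1 / Lt1) - 1) + 1 := by
    have : 1 ≤ (2 : ℝ) ^ (B1 / Lt1) := one_le_rpow one_le_two (by positivity)
    positivity
  have hg' := hg.trans (funext (caseBI_objective_eq hα1.ne' hα2.ne' hL.ne))
  have hconv : StrictConvexOn ℝ univ g := hg' ▸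
    strictConvexOn_two_rpow (by positivity) (by positivity) two_pos (by norm_num)
      (by positivity) _
  have hmin : IsMinOn g univ Rd := hconv.convexOn.isMinOn_of_hasDerivAt_eq_zero (by simp) <| by
    rw [hg', ← caseBI_deriv_eq_zero hX hLt2.ne' hα2.ne' hL.ne hRd]
    exact hasDerivAt_two_rpow two_pos (by positivity) _ Rd
  exact ⟨hconv.convexOn, fun R => hmin (mem_univ R),
    fun R hR => hconv.eq_of_isMinOn (fun S _ => hR S) hmin trivial trivial⟩

/-- Case B-I: the two-slot full multiple access energy, as a function of user 2's
first-slot rate, is convex and attains its global minimum at the unique point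
R_d = B2/L̃2 − (L̃2 − L̃1)·φ1/L̃2 with φ1 = log2((α2/α1)(2^(B1/L̃1) − 1) + 1). -/
theorem caseBI_objective_convex_min
    (Lt1 Lt2 α1 α2 B1 B2 : ℝ)
    (hLt1 : 0 < Lt1) (hLt2 : 0 < Lt2) (hα1 : 0 < α1) (hα2 : 0 < α2)
    (hB1 : 0 < B1) (hB2 : 0 < B2) (hL : Lt1 < Lt2)
    (g : ℝ → ℝ)
    (hg : g = fun R : ℝ =>
      Lt1 * (((2 : ℝ) ^ (B1 / Lt1 + R) - (2 : ℝ) ^ R) / α1 +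
        ((2 : ℝ) ^ R - 1) / α2) +
      ((Lt2 - Lt1) / α2) * ((2 : ℝ) ^ ((B2 - Lt1 * R) / (Lt2 - Lt1)) - 1))
    (Rd : ℝ)
    (hRd : Rd = B2 / Lt2 -
      (Lt2 - Lt1) * log2 ((α2 / α1) * ((2 : ℝ) ^ (B1 / Lt1) - 1) + 1) / Lt2) :
    ConvexOn ℝ Set.univ g ∧
    (∀ R : ℝ, g Rd ≤ g R) ∧
    (∀ R : ℝ, (∀ S : ℝ, g R ≤ g S) → R = Rd) :=
  caseBI_objective_convex_min_general Lt1 Lt2 α1 α2 B1 B2 hLt1 hLt2 hα1 hα2 hB1 hL g hg Rd hRd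
end

section
/- Let α1, α2 > 0 and let R11, R21 ≥ 0 be reals such that Δ := 2^{R11} + 2^{R21} − 2^{R11 + R21} > 0. Define P11 = 2^{R21}·(2^{R11} − 1)/(α1·Δ) and P21 = 2^{R11}·(2^{R21} − 1)/(α2·Δ). Then P11 ≥ 0, P21 ≥ 0, R11 = log2(1 + α1·P11/(1 + α2·P21)), and R21 = log2(1 + α2·P21/(1 + α1·P11)). (Closed-form minimal powers achieving a given rate pair with independent decoding.) -/
/-!
Write `a = 2^R11`, `b = 2^R21` and `Δ = a + b - a b`. The proposed powers satisfy
`1 + α1 P11 = a / Δ` and `1 + α2 P21 = b / Δ`, so the SINR of user 1 is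
`α1 P11 / (1 + α2 P21) = (b (a - 1) / Δ) / (b / Δ) = a - 1`, i.e. its rate is exactly `log2 a = R11`;
symmetrically for user 2.
-/

/-- With `a = 2^R11`, `b = 2^R21`: `P11 = indDecPower α1 a b` and `P21 = indDecPower α2 b a`. -/
noncomputable def indDecPower (α a b : ℝ) : ℝ := b * (a - 1) / (α * (a + b - a * b))

lemma indDecPower_nonneg {α a b : ℝ} (hα : 0 < α) (ha : 1 ≤ a) (hb : 0 ≤ b)
    (hΔ : 0 < a + b - a * b) : 0 ≤ indDecPower α a b :=
  div_nonneg (mul_nonneg hb (sub_nonneg.mpr ha)) (mul_pos hα hΔ).le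

lemma mul_indDecPower {α a b : ℝ} (hα : α ≠ 0) :
    α * indDecPower α a b = b * (a - 1) / (a + b - a * b) := by
  rw [indDecPower, mul_div_assoc', mul_div_mul_left _ _ hα]

lemma one_add_mul_indDecPower {α a b : ℝ} (hα : α ≠ 0) (hΔ : a + b - a * b ≠ 0) :
    1 + α * indDecPower α a b = a / (a + b - a * b) := by
  rw [mul_indDecPower hα, one_add_div hΔ]
  ring

lemma one_add_sinr_indDecPower {α₁ α₂ a b : ℝ} (hα₁ : α₁ ≠ 0) (hα₂ : α₂ ≠ 0) (hb : b ≠ 0)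
    (hΔ : a + b - a * b ≠ 0) :
    1 + α₁ * indDecPower α₁ a b / (1 + α₂ * indDecPower α₂ b a) = a := by
  have hΔ_comm : b + a - b * a = a + b - a * b := by ring
  rw [one_add_mul_indDecPower hα₂ (hΔ_comm ▸ hΔ), hΔ_comm, mul_indDecPower hα₁,
    div_div_div_cancel_right₀ hΔ, mul_div_cancel_left₀ _ hb, add_sub_cancel]

lemma log2_two_rpow (x : ℝ) : log2 ((2 : ℝ) ^ x) = x :=
  Real.logb_rpow two_pos (by norm_num)

/-- Closed-form minimal powers achieving a given rate pair with independent decoding. -/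
theorem ind_dec_closed_form_powers
    (α1 α2 R11 R21 : ℝ)
    (hα1 : 0 < α1) (hα2 : 0 < α2) (hR11 : 0 ≤ R11) (hR21 : 0 ≤ R21)
    (hΔ : 0 < (2 : ℝ) ^ R11 + (2 : ℝ) ^ R21 - (2 : ℝ) ^ (R11 + R21))
    (P11 P21 : ℝ)
    (hP11 : P11 = (2 : ℝ) ^ R21 * ((2 : ℝ) ^ R11 - 1) /
      (α1 * ((2 : ℝ) ^ R11 + (2 : ℝ) ^ R21 - (2 : ℝ) ^ (R11 + R21))))
    (hP21 : P21 = (2 : ℝ) ^ R11 * ((2 : ℝ) ^ R21 - 1) /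
      (α2 * ((2 : ℝ) ^ R11 + (2 : ℝ) ^ R21 - (2 : ℝ) ^ (R11 + R21)))) :
    0 ≤ P11 ∧ 0 ≤ P21 ∧
    R11 = log2 (1 + α1 * P11 / (1 + α2 * P21)) ∧
    R21 = log2 (1 + α2 * P21 / (1 + α1 * P11)) := by
  set a := (2 : ℝ) ^ R11
  set b := (2 : ℝ) ^ R21
  have ha : 1 ≤ a := Real.one_le_rpow one_le_two hR11
  have hb : 1 ≤ b := Real.one_le_rpow one_le_two hR21
  rw [Real.rpow_add two_pos] at hΔ hP11 hP21
  have hΔ' : 0 < b + a - b * a := by linarith [mul_comm a b]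
  have hP11' : P11 = indDecPower α1 a b := hP11
  have hP21' : P21 = indDecPower α2 b a := by rw [hP21, indDecPower]; ring
  subst hP11' hP21'
  refine ⟨indDecPower_nonneg hα1 ha (by linarith) hΔ,
    indDecPower_nonneg hα2 hb (by linarith) hΔ', ?_, ?_⟩
  · rw [one_add_sinr_indDecPower hα1.ne' hα2.ne' (by positivity) hΔ.ne', log2_two_rpow]
  · rw [one_add_sinr_indDecPower hα2.ne' hα1.ne' (by positivity) hΔ'.ne', log2_two_rpow]
end
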